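/- In the coalescence setting (G is the coalescence of H₁ and H₂ via the non-isolated vertex x), if x is a critical vertex of both H₁ and H₂, then the set of critical vertices of G equals (V^-(H₁) ∖ {x}) ∪ (V^-(H₂) ∖ {x}) ∪ {x}, where V^-(H) denotes the set of critical vertices of H. -/
import Mathlib


open SimpleGraph Set

/-- `S` is a dominating set of the induced subgraph of `G` on the vertex set `A`:
`S ⊆ A` and every vertex of `A` is in the closed neighborhood of some vertex of `S`. -/
def IsDomOn {V : Type*} (G : SimpleGraph V) (A S : Set V) : Prop :=
  S ⊆ A ∧ ∀ v ∈ A, ∃ s ∈ S, s = v ∨ G.Adj s v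

/-- The domination number of the induced subgraph of `G` on the vertex set `A`. -/
noncomputable def domNumOn {V : Type*} (G : SimpleGraph V) (A : Set V) : ℕ :=
  sInf {n | ∃ S : Set V, IsDomOn G A S ∧ S.ncard = n}

/-- The domination number of `G`. -/
noncomputable def domNum {V : Type*} (G : SimpleGraph V) : ℕ :=
  domNumOn G Set.univ

/-- `y` is a critical vertex of the induced subgraph of `G` on `A`:
deleting `y` decreases the domination number. -/
def IsCritVertexOn {V : Type*} (G : SimpleGraph V) (A : Set V) (y : V) : Prop :=
  domNumOn G (A \ {y}) < domNumOn G A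

/-- The induced subgraph of `G` on `A` is critical: all its vertices are critical. -/
def CriticalOn {V : Type*} (G : SimpleGraph V) (A : Set V) : Prop :=
  ∀ y ∈ A, IsCritVertexOn G A y

/-- The induced subgraph of `G` on `A` is weak bicritical: no vertex deletion increases the
domination number (`V⁺ = ∅`), and deleting any vertex that keeps the domination number
unchanged (a vertex of `V⁰`) yields a critical graph. -/
def WeakBicriticalOn {V : Type*} (G : SimpleGraph V) (A : Set V) : Prop :=
  (∀ y ∈ A, domNumOn G (A \ {y}) ≤ domNumOn G A) ∧
  (∀ y ∈ A, domNumOn G (A \ {y}) = domNumOn G A → CriticalOn G (A \ {y}))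

section Aux
set_option linter.unusedSectionVars false

variable {V : Type*} [Fintype V] (G : SimpleGraph V)

lemma isDomOn_self (A : Set V) : IsDomOn G A A :=
  ⟨subset_rfl, fun v hv => ⟨v, hv, Or.inl rfl⟩⟩

lemma exists_min_domOn (A : Set V) : ∃ S, IsDomOn G A S ∧ S.ncard = domNumOn G A := by
  have hne : {n | ∃ S : Set V, IsDomOn G A S ∧ S.ncard = n}.Nonempty :=
    ⟨A.ncard, A, isDomOn_self G A, rfl⟩
  exact Nat.sInf_mem hne

lemma domNumOn_le_ncard {A S : Set V} (h : IsDomOn G A S) : domNumOn G A ≤ S.ncard :=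
  Nat.sInf_le ⟨S, h, rfl⟩

lemma domNumOn_union_le (A B : Set V) :
    domNumOn G (A ∪ B) ≤ domNumOn G A + domNumOn G B := by
  obtain ⟨S, hS, hSc⟩ := exists_min_domOn G A
  obtain ⟨T, hT, hTc⟩ := exists_min_domOn G B
  have hST : IsDomOn G (A ∪ B) (S ∪ T) := by
    constructor
    · exact Set.union_subset_union hS.1 hT.1
    · intro v hv
      rcases hv with hv | hv
      · obtain ⟨s, hs, hd⟩ := hS.2 v hv; exact ⟨s, Or.inl hs, hd⟩
      · obtain ⟨s, hs, hd⟩ := hT.2 v hv; exact ⟨s, Or.inr hs, hd⟩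
  calc domNumOn G (A ∪ B) ≤ (S ∪ T).ncard := domNumOn_le_ncard G hST
    _ ≤ S.ncard + T.ncard := Set.ncard_union_le S T
    _ = _ := by rw [hSc, hTc]

lemma domNumOn_singleton_le (a : V) : domNumOn G {a} ≤ 1 := by
  have := domNumOn_le_ncard G (isDomOn_self G {a})
  simpa using this

lemma extract (x : V) (V1 V2 : Set V)
    (hunion : V1 ∪ V2 = Set.univ) (hinter : V1 ∩ V2 = {x})
    (hsep : ∀ a ∈ V1, ∀ b ∈ V2, a ≠ x → b ≠ x → ¬ G.Adj a b)
    (B : Set V) (hB : B ⊆ V1 \ {x}) (S : Set V)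
    (hS : IsDomOn G (Set.univ \ B) S) :
    domNumOn G (V1 \ B) + domNumOn G V2 ≤ S.ncard + 1 := by
  have hx12 : x ∈ V1 ∩ V2 := by rw [hinter]; exact rfl
  have hxV1 : x ∈ V1 := hx12.1
  have hxV2 : x ∈ V2 := hx12.2
  have hmem : ∀ v : V, v ∈ V1 ∨ v ∈ V2 := by
    intro v; rw [← Set.mem_union, hunion]; exact Set.mem_univ v
  have honly : ∀ v, v ∈ V1 → v ∈ V2 → v = x := by
    intro v h1 h2
    have : v ∈ V1 ∩ V2 := ⟨h1, h2⟩
    rwa [hinter] at this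
  have hxB : x ∉ B := fun h => (hB h).2 rfl
  have hSB : ∀ s ∈ S, s ∉ B := fun s hs => (hS.1 hs).2
  have hdom : ∀ v, v ∉ B → ∃ s ∈ S, s = v ∨ G.Adj s v :=
    fun v hv => hS.2 v ⟨Set.mem_univ v, hv⟩
  have key1 : ∀ v ∈ V1, v ∉ B → v ≠ x → ∃ s ∈ S ∩ V1, s = v ∨ G.Adj s v := by
    intro v hv hvB hvx
    obtain ⟨s, hsS, hsd⟩ := hdom v hvB
    refine ⟨s, ⟨hsS, ?_⟩, hsd⟩
    rcases hsd with rfl | hadj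
    · exact hv
    · by_contra hsV1
      have hsV2 : s ∈ V2 := (hmem s).resolve_left hsV1
      have hsx : s ≠ x := fun h => hsV1 (h ▸ hxV1)
      exact hsep v hv s hsV2 hvx hsx hadj.symm
  have key2 : ∀ v ∈ V2, v ≠ x → ∃ s ∈ S, (s = v ∨ G.Adj s v) ∧ (s = x ∨ s ∈ V2 \ {x}) := by
    intro v hv hvx
    have hvB : v ∉ B := fun h => hvx (honly v (hB h).1 hv)
    obtain ⟨s, hsS, hsd⟩ := hdom v hvB
    refine ⟨s, hsS, hsd, ?_⟩
    by_cases hsx : s = x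
    · exact Or.inl hsx
    · refine Or.inr ⟨?_, hsx⟩
      rcases hsd with rfl | hadj
      · exact hv
      · by_contra hsV2
        have hsV1 : s ∈ V1 := (hmem s).resolve_right hsV2
        exact hsep s hsV1 v hv hsx hvx hadj
  have hdisj : Disjoint (S ∩ V1) (S ∩ (V2 \ {x})) := by
    rw [Set.disjoint_left]
    rintro a ⟨haS, haV1⟩ ⟨_, haV2, hax⟩
    exact hax (honly a haV1 haV2)
  have hcards : (S ∩ V1).ncard + (S ∩ (V2 \ {x})).ncard ≤ S.ncard := by
    rw [← Set.ncard_union_eq hdisj (Set.toFinite _) (Set.toFinite _)]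
    exact Set.ncard_le_ncard
      (Set.union_subset Set.inter_subset_left Set.inter_subset_left) (Set.toFinite S)
  by_cases hx : ∃ s ∈ S ∩ V1, s = x ∨ G.Adj s x
  · -- x is dominated from the V1 side
    have hT1 : IsDomOn G (V1 \ B) (S ∩ V1) := by
      constructor
      · rintro s ⟨hsS, hsV1⟩; exact ⟨hsV1, hSB s hsS⟩
      · rintro v ⟨hvV1, hvB⟩
        by_cases hvx : v = x
        · subst hvx; exact hx
        · exact key1 v hvV1 hvB hvx
    have hT2 : IsDomOn G V2 (insert x (S ∩ (V2 \ {x}))) := by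
      constructor
      · rintro s hs
        rcases hs with rfl | ⟨_, hsV2, _⟩
        exacts [hxV2, hsV2]
      · intro v hv
        by_cases hvx : v = x
        · exact ⟨x, Set.mem_insert _ _, Or.inl hvx.symm⟩
        · obtain ⟨s, hsS, hsd, hloc⟩ := key2 v hv hvx
          rcases hloc with rfl | hsV2x
          · rcases hsd with rfl | hadj
            · exact absurd rfl hvx
            · exact ⟨s, Set.mem_insert _ _, Or.inr hadj⟩
          · exact ⟨s, Set.mem_insert_of_mem _ ⟨hsS, hsV2x⟩, hsd⟩
    have h1 := domNumOn_le_ncard G hT1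
    have h2 := domNumOn_le_ncard G hT2
    have h3 : (insert x (S ∩ (V2 \ {x}))).ncard ≤ (S ∩ (V2 \ {x})).ncard + 1 :=
      Set.ncard_insert_le _ _
    omega
  · -- x is not dominated from the V1 side
    push_neg at hx
    have hT1 : IsDomOn G (V1 \ B) (insert x (S ∩ V1)) := by
      constructor
      · rintro s hs
        rcases hs with rfl | ⟨hsS, hsV1⟩
        exacts [⟨hxV1, hxB⟩, ⟨hsV1, hSB s hsS⟩]
      · rintro v ⟨hvV1, hvB⟩
        by_cases hvx : v = x
        · exact ⟨x, Set.mem_insert _ _, Or.inl hvx.symm⟩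
        · obtain ⟨s, hs, hd⟩ := key1 v hvV1 hvB hvx
          exact ⟨s, Set.mem_insert_of_mem _ hs, hd⟩
    have hT2 : IsDomOn G V2 (S ∩ (V2 \ {x})) := by
      constructor
      · rintro s ⟨_, hsV2, _⟩; exact hsV2
      · intro v hv
        by_cases hvx : v = x
        · subst hvx
          obtain ⟨s, hsS, hsd⟩ := hdom v hxB
          rcases hsd with rfl | hadj
          · exact absurd rfl (hx s ⟨hsS, hxV1⟩).1
          · have hsV1 : s ∉ V1 := fun h => (hx s ⟨hsS, h⟩).2 hadj
            have hsV2 : s ∈ V2 := (hmem s).resolve_left hsV1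
            exact ⟨s, ⟨hsS, hsV2, hadj.ne⟩, Or.inr hadj⟩
        · obtain ⟨s, hsS, hsd, hloc⟩ := key2 v hv hvx
          rcases hloc with rfl | hsV2x
          · exact absurd rfl (hx s ⟨hsS, hxV1⟩).1
          · exact ⟨s, ⟨hsS, hsV2x⟩, hsd⟩
    have h1 := domNumOn_le_ncard G hT1
    have h2 := domNumOn_le_ncard G hT2
    have h3 : (insert x (S ∩ V1)).ncard ≤ (S ∩ V1).ncard + 1 :=
      Set.ncard_insert_le _ _
    omega

lemma gval (x : V) (V1 V2 : Set V)
    (hunion : V1 ∪ V2 = Set.univ) (hinter : V1 ∩ V2 = {x})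
    (hsep : ∀ a ∈ V1, ∀ b ∈ V2, a ≠ x → b ≠ x → ¬ G.Adj a b)
    (hcrit1 : IsCritVertexOn G V1 x) (hcrit2 : IsCritVertexOn G V2 x) :
    domNumOn G Set.univ + 1 = domNumOn G V1 + domNumOn G V2 := by
  have hmem : ∀ v : V, v ∈ V1 ∨ v ∈ V2 := by
    intro v; rw [← Set.mem_union, hunion]; exact Set.mem_univ v
  have hset : (V1 \ {x}) ∪ ((V2 \ {x}) ∪ {x}) = Set.univ := by
    apply Set.eq_univ_of_forall
    intro v
    simp only [Set.mem_union, Set.mem_diff, Set.mem_singleton_iff]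
    by_cases hvx : v = x
    · exact Or.inr (Or.inr hvx)
    · rcases hmem v with h | h
      · exact Or.inl ⟨h, hvx⟩
      · exact Or.inr (Or.inl ⟨h, hvx⟩)
  have h1 : domNumOn G Set.univ ≤
      domNumOn G (V1 \ {x}) + (domNumOn G (V2 \ {x}) + domNumOn G ({x} : Set V)) := by
    rw [← hset]
    calc domNumOn G ((V1 \ {x}) ∪ ((V2 \ {x}) ∪ {x}))
        ≤ domNumOn G (V1 \ {x}) + domNumOn G ((V2 \ {x}) ∪ {x}) :=
          domNumOn_union_le G _ _
      _ ≤ domNumOn G (V1 \ {x}) + (domNumOn G (V2 \ {x}) + domNumOn G ({x} : Set V)) :=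
          Nat.add_le_add_left (domNumOn_union_le G _ _) _
  have h2 := domNumOn_singleton_le G x
  have h3 : domNumOn G V1 + domNumOn G V2 ≤ domNumOn G Set.univ + 1 := by
    obtain ⟨S, hS, hc⟩ := exists_min_domOn G Set.univ
    have hS' : IsDomOn G (Set.univ \ (∅ : Set V)) S := by rwa [Set.diff_empty]
    have := extract G x V1 V2 hunion hinter hsep ∅ (Set.empty_subset _) S hS'
    rw [Set.diff_empty, hc] at this
    exact this
  have e1 : domNumOn G (V1 \ {x}) < domNumOn G V1 := hcrit1
  have e2 : domNumOn G (V2 \ {x}) < domNumOn G V2 := hcrit2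
  omega

lemma crit_x (x : V) (V1 V2 : Set V)
    (hunion : V1 ∪ V2 = Set.univ) (hinter : V1 ∩ V2 = {x})
    (hsep : ∀ a ∈ V1, ∀ b ∈ V2, a ≠ x → b ≠ x → ¬ G.Adj a b)
    (hcrit1 : IsCritVertexOn G V1 x) (hcrit2 : IsCritVertexOn G V2 x) :
    IsCritVertexOn G Set.univ x := by
  have hmem : ∀ v : V, v ∈ V1 ∨ v ∈ V2 := by
    intro v; rw [← Set.mem_union, hunion]; exact Set.mem_univ v
  show domNumOn G (Set.univ \ {x}) < domNumOn G Set.univ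
  have hset : (V1 \ {x}) ∪ (V2 \ {x}) = Set.univ \ {x} := by
    ext v
    simp only [Set.mem_union, Set.mem_diff, Set.mem_singleton_iff, Set.mem_univ, true_and]
    constructor
    · rintro (⟨_, h⟩ | ⟨_, h⟩) <;> exact h
    · intro hvx
      rcases hmem v with h | h
      exacts [Or.inl ⟨h, hvx⟩, Or.inr ⟨h, hvx⟩]
  have h := domNumOn_union_le G (V1 \ {x}) (V2 \ {x})
  rw [hset] at h
  have hg := gval G x V1 V2 hunion hinter hsep hcrit1 hcrit2
  have e1 : domNumOn G (V1 \ {x}) < domNumOn G V1 := hcrit1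
  have e2 : domNumOn G (V2 \ {x}) < domNumOn G V2 := hcrit2
  omega

lemma crit_iff (x : V) (V1 V2 : Set V)
    (hunion : V1 ∪ V2 = Set.univ) (hinter : V1 ∩ V2 = {x})
    (hsep : ∀ a ∈ V1, ∀ b ∈ V2, a ≠ x → b ≠ x → ¬ G.Adj a b)
    (hcrit1 : IsCritVertexOn G V1 x) (hcrit2 : IsCritVertexOn G V2 x)
    (y : V) (hy : y ∈ V1) (hyx : y ≠ x) :
    IsCritVertexOn G Set.univ y ↔ IsCritVertexOn G V1 y := by
  have hx12 : x ∈ V1 ∩ V2 := by rw [hinter]; exact rfl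
  have hxV1 : x ∈ V1 := hx12.1
  have hmem : ∀ v : V, v ∈ V1 ∨ v ∈ V2 := by
    intro v; rw [← Set.mem_union, hunion]; exact Set.mem_univ v
  have honly : ∀ v, v ∈ V1 → v ∈ V2 → v = x := by
    intro v h1 h2
    have : v ∈ V1 ∩ V2 := ⟨h1, h2⟩
    rwa [hinter] at this
  have hyV2 : y ∉ V2 := fun h => hyx (honly y hy h)
  have hg := gval G x V1 V2 hunion hinter hsep hcrit1 hcrit2
  have e2 : domNumOn G (V2 \ {x}) < domNumOn G V2 := hcrit2
  constructor
  · intro hcr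
    have hcr' : domNumOn G (Set.univ \ {y}) < domNumOn G Set.univ := hcr
    show domNumOn G (V1 \ {y}) < domNumOn G V1
    obtain ⟨S, hS, hc⟩ := exists_min_domOn G (Set.univ \ {y})
    have hBy : ({y} : Set V) ⊆ V1 \ {x} := by
      intro z hz
      rw [Set.mem_singleton_iff] at hz
      subst hz
      exact ⟨hy, hyx⟩
    have hext := extract G x V1 V2 hunion hinter hsep {y} hBy S hS
    rw [hc] at hext
    omega
  · intro hcr
    have hcr' : domNumOn G (V1 \ {y}) < domNumOn G V1 := hcr
    show domNumOn G (Set.univ \ {y}) < domNumOn G Set.univ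
    have hset : (V1 \ {y}) ∪ (V2 \ {x}) = Set.univ \ {y} := by
      ext v
      simp only [Set.mem_union, Set.mem_diff, Set.mem_singleton_iff, Set.mem_univ, true_and]
      constructor
      · rintro (⟨_, h⟩ | ⟨hv2, _⟩)
        · exact h
        · exact fun h => hyV2 (h ▸ hv2)
      · intro hvy
        rcases hmem v with h | h
        · exact Or.inl ⟨h, hvy⟩
        · by_cases hvx : v = x
          · exact Or.inl ⟨hvx ▸ hxV1, hvy⟩
          · exact Or.inr ⟨h, hvx⟩
    have h := domNumOn_union_le G (V1 \ {y}) (V2 \ {x})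
    rw [hset] at h
    omega

end Aux

/-- Coalescence: if x is a critical vertex of both H₁ and H₂, then
V⁻(G) = (V⁻(H₁) ∖ {x}) ∪ (V⁻(H₂) ∖ {x}) ∪ {x}. -/
theorem stmt_9 {V : Type*} [Fintype V] (G : SimpleGraph V) (x : V) (V1 V2 : Set V)
    (hunion : V1 ∪ V2 = Set.univ) (hinter : V1 ∩ V2 = {x})
    (hsep : ∀ a ∈ V1, ∀ b ∈ V2, a ≠ x → b ≠ x → ¬ G.Adj a b)
    (hx1 : ∃ a ∈ V1, G.Adj x a) (hx2 : ∃ b ∈ V2, G.Adj x b)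
    (hcrit1 : IsCritVertexOn G V1 x) (hcrit2 : IsCritVertexOn G V2 x) :
    {y : V | IsCritVertexOn G Set.univ y} =
      ({y ∈ V1 | IsCritVertexOn G V1 y} \ {x}) ∪
        ({y ∈ V2 | IsCritVertexOn G V2 y} \ {x}) ∪ {x} := by
  have hmem : ∀ v : V, v ∈ V1 ∨ v ∈ V2 := by
    intro v; rw [← Set.mem_union, hunion]; exact Set.mem_univ v
  have honly : ∀ v, v ∈ V1 → v ∈ V2 → v = x := by
    intro v h1 h2
    have : v ∈ V1 ∩ V2 := ⟨h1, h2⟩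
    rwa [hinter] at this
  have hunion' : V2 ∪ V1 = Set.univ := by rw [Set.union_comm]; exact hunion
  have hinter' : V2 ∩ V1 = {x} := by rw [Set.inter_comm]; exact hinter
  have hsep' : ∀ a ∈ V2, ∀ b ∈ V1, a ≠ x → b ≠ x → ¬ G.Adj a b :=
    fun a ha b hb hax hbx hadj => hsep b hb a ha hbx hax hadj.symm
  ext y
  simp only [Set.mem_setOf_eq, Set.mem_union, Set.mem_diff, Set.mem_singleton_iff]
  by_cases hyx : y = x
  · subst hyx
    exact iff_of_true (crit_x G y V1 V2 hunion hinter hsep hcrit1 hcrit2) (Or.inr rfl)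
  · by_cases hy1 : y ∈ V1
    · have hyV2 : y ∉ V2 := fun h => hyx (honly y hy1 h)
      have hiff := crit_iff G x V1 V2 hunion hinter hsep hcrit1 hcrit2 y hy1 hyx
      constructor
      · intro h
        exact Or.inl (Or.inl ⟨⟨hy1, hiff.mp h⟩, hyx⟩)
      · rintro ((⟨⟨_, h⟩, _⟩ | ⟨⟨h2, _⟩, _⟩) | h)
        · exact hiff.mpr h
        · exact absurd h2 hyV2
        · exact absurd h hyx
    · have hy2 : y ∈ V2 := (hmem y).resolve_left hy1
      have hiff := crit_iff G x V2 V1 hunion' hinter' hsep' hcrit2 hcrit1 y hy2 hyx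
      constructor
      · intro h
        exact Or.inl (Or.inr ⟨⟨hy2, hiff.mp h⟩, hyx⟩)
      · rintro ((⟨⟨h1, _⟩, _⟩ | ⟨⟨_, h⟩, _⟩) | h)
        · exact absurd h1 hy1
        · exact hiff.mpr h
        · exact absurd h hyx
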